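/- Let L be a join-semilattice and let (Y, Supp_Y) be any support datum of L. Then there exists a map of support data f: X_L → Y, i.e., a continuous map with f^{-1}(Supp_Y(l)) = Supp(l) for every l ∈ L. Such a map can be obtained by sending each P ∈ X_L to a point of Supp_Y(P̄) \ Supp_Y(P), where P̄ denotes the intersection of all ind-objects strictly containing P and Supp_Y is extended to Ind(L) by Supp_Y(S) = ∪_{l∈S} Supp_Y(l); this difference set is nonempty. -/

import Mathlib

/-!
For `P ∈ X_L` the union `Supp_Y(P̄)` strictly contains `Supp_Y(P)`, because `P̄` is an
ind-object strictly containing `P` and `S ↦ Supp_Y(S)` is injective. Any point `y` of the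
difference satisfies `y ∈ Supp_Y(l) ↔ l ∉ P`: if `l ∉ P`, then `P̄` lies in the ind-object
generated by `P` and `l`, so `y ∈ Supp_Y(p ⊔ l) = Supp_Y(p) ∪ Supp_Y(l)` for some `p ∈ P`,
and `y ∉ Supp_Y(p)`. Choosing such a point for every `P` gives a map pulling `Supp_Y(l)` back
to `Supp(l)`, which is continuous since the generating closed sets pull back to closed sets.
-/

/-- An ind-object of a join-semilattice `L`: a nonempty, downward closed subset of `L`
closed under joins of two elements. -/
def IsIndObject {L : Type*} [SemilatticeSup L] (S : Set L) : Prop :=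
  S.Nonempty ∧ (∀ ⦃l s : L⦄, l ≤ s → s ∈ S → l ∈ S) ∧ ∀ ⦃a b : L⦄, a ∈ S → b ∈ S → a ⊔ b ∈ S

/-- `Ind(L)`, the set of ind-objects of `L`, partially ordered by inclusion. -/
abbrev IndObj (L : Type*) [SemilatticeSup L] := {S : Set L // IsIndObject S}

/-- The intersection of all ind-objects strictly containing `P`. -/
def indInterAbove {L : Type*} [SemilatticeSup L] (P : IndObj L) : Set L :=
  ⋂ (Q : IndObj L) (_ : P.1 ⊂ Q.1), Q.1

/-- `X_L`: the set of `P ∈ Ind(L)` such that the intersection of all ind-objects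
strictly containing `P` strictly contains `P`. -/
abbrev XL (L : Type*) [SemilatticeSup L] := {P : IndObj L // P.1 ⊂ indInterAbove P}

/-- `Supp(l) = {P ∈ X_L | l ∉ P}` for `l ∈ L`. -/
def ptSupp {L : Type*} [SemilatticeSup L] (l : L) : Set (XL L) :=
  {P : XL L | l ∉ P.1.1}

/-- The topology on `X_L` whose closed sets are generated by `{Supp(l) | l ∈ L}`. -/
instance XL.topologicalSpace (L : Type*) [SemilatticeSup L] : TopologicalSpace (XL L) :=
  .generateFrom {U : Set (XL L) | ∃ l : L, U = (ptSupp l)ᶜ}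

section IndObject

variable {L : Type*} [SemilatticeSup L]

theorem subset_indInterAbove (P : IndObj L) : P.1 ⊆ indInterAbove P :=
  Set.subset_iInter₂ fun _ hPQ => hPQ.subset

theorem isIndObject_indInterAbove (P : IndObj L) : IsIndObject (indInterAbove P) := by
  simp only [IsIndObject, indInterAbove, Set.mem_iInter]
  refine ⟨P.2.1.mono (subset_indInterAbove P), ?_, ?_⟩
  · exact fun l s hls hs Q hPQ => Q.2.2.1 hls (hs Q hPQ)
  · exact fun a b ha hb Q hPQ => Q.2.2.2 (ha Q hPQ) (hb Q hPQ)

def adjoinSup (S : Set L) (l : L) : Set L :=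
  {m | ∃ s ∈ S, m ≤ s ⊔ l}

theorem subset_adjoinSup (S : Set L) (l : L) : S ⊆ adjoinSup S l :=
  fun s hs => ⟨s, hs, le_sup_left⟩

theorem isIndObject_adjoinSup {S : Set L} (hS : IsIndObject S) (l : L) :
    IsIndObject (adjoinSup S l) := by
  refine ⟨hS.1.mono (subset_adjoinSup S l), ?_, ?_⟩
  · rintro m s hms ⟨p, hp, hs⟩
    exact ⟨p, hp, hms.trans hs⟩
  · rintro a b ⟨p, hp, ha⟩ ⟨q, hq, hb⟩
    refine ⟨p ⊔ q, hS.2.2 hp hq, sup_le ?_ ?_⟩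
    · exact ha.trans (sup_le_sup_right le_sup_left l)
    · exact hb.trans (sup_le_sup_right le_sup_right l)

theorem Set.Nonempty.ssubset_adjoinSup {S : Set L} (hS : S.Nonempty) {l : L} (hl : l ∉ S) :
    S ⊂ adjoinSup S l := by
  refine (Set.ssubset_iff_of_subset (subset_adjoinSup S l)).mpr ⟨l, ?_, hl⟩
  obtain ⟨s, hs⟩ := hS
  exact ⟨s, hs, le_sup_right⟩

theorem indInterAbove_subset_adjoinSup (P : IndObj L) {l : L} (hl : l ∉ P.1) :
    indInterAbove P ⊆ adjoinSup P.1 l :=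
  Set.biInter_subset_of_mem (t := fun Q : IndObj L => Q.1)
    (x := ⟨_, isIndObject_adjoinSup P.2 l⟩) (P.2.1.ssubset_adjoinSup hl)

end IndObject

section SupportDatum

variable {L : Type*} [SemilatticeSup L] {Y : Type*} {sY : L → Set Y}

/-- The paper's `Supp_Y(S)`. -/
def indSupp (sY : L → Set Y) (S : Set L) : Set Y :=
  ⋃ l ∈ S, sY l

theorem monotone_of_map_sup (hjoin : ∀ l l' : L, sY (l ⊔ l') = sY l ∪ sY l') : Monotone sY :=
  OrderHomClass.mono (⟨sY, hjoin⟩ : SupHom L (Set Y))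

theorem indSupp_diff_nonempty (hinj : Function.Injective (fun S : IndObj L => indSupp sY S.1))
    (P : XL L) : (indSupp sY (indInterAbove P.1) \ indSupp sY P.1.1).Nonempty := by
  rw [Set.sdiff_nonempty]
  intro hsub
  have hsup : indSupp sY P.1.1 ⊆ indSupp sY (indInterAbove P.1) :=
    Set.biUnion_subset_biUnion_left (subset_indInterAbove P.1)
  have heq : (⟨indInterAbove P.1, isIndObject_indInterAbove P.1⟩ : IndObj L) = P.1 :=
    hinj (hsub.antisymm hsup)
  exact P.2.2 (congrArg Subtype.val heq).subset

theorem mem_iff_notMem_of_mem_indSupp_diff (hjoin : ∀ l l' : L, sY (l ⊔ l') = sY l ∪ sY l')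
    {P : XL L} {y : Y} (hy : y ∈ indSupp sY (indInterAbove P.1) \ indSupp sY P.1.1) (l : L) :
    y ∈ sY l ↔ l ∉ P.1.1 := by
  obtain ⟨hbar, hP⟩ := hy
  refine ⟨fun hyl hl => hP (Set.mem_biUnion hl hyl), fun hl => ?_⟩
  obtain ⟨m, hm, hym⟩ := Set.mem_iUnion₂.mp hbar
  obtain ⟨p, hp, hmp⟩ := indInterAbove_subset_adjoinSup P.1 hl hm
  have hypl : y ∈ sY p ∪ sY l := hjoin p l ▸ monotone_of_map_sup hjoin hmp hym
  exact hypl.resolve_left fun hyp => hP (Set.mem_biUnion hp hyp)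

end SupportDatum

theorem stmt_5_general (L : Type*) [SemilatticeSup L] (Y : Type*) [tY : TopologicalSpace Y]
    (sY : L → Set Y)
    (hjoin : ∀ l l' : L, sY (l ⊔ l') = sY l ∪ sY l')
    (hinj : Function.Injective (fun S : IndObj L => ⋃ l ∈ S.1, sY l))
    (htop : tY = TopologicalSpace.generateFrom {U : Set Y | ∃ l : L, U = (sY l)ᶜ}) :
    (∀ P : XL L, ((⋃ l ∈ indInterAbove P.1, sY l) \ (⋃ l ∈ P.1.1, sY l)).Nonempty) ∧
    ∃ f : XL L → Y, Continuous f ∧ (∀ l : L, f ⁻¹' sY l = ptSupp l) ∧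
      ∀ P : XL L, f P ∈ (⋃ l ∈ indInterAbove P.1, sY l) \ (⋃ l ∈ P.1.1, sY l) := by
  subst htop
  choose f hf using indSupp_diff_nonempty (sY := sY) hinj
  have hpre : ∀ l, f ⁻¹' sY l = ptSupp l := fun l =>
    Set.ext fun P => mem_iff_notMem_of_mem_indSupp_diff hjoin (hf P) l
  refine ⟨indSupp_diff_nonempty hinj, f, continuous_generateFrom_iff.mpr ?_, hpre, hf⟩
  rintro _ ⟨l, rfl⟩
  rw [Set.preimage_compl, hpre]
  exact .basic _ ⟨l, rfl⟩

/-- For any support datum `(Y, Supp_Y)` of `L`, there exists a map of support data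
`f : X_L → Y`, i.e. a continuous map with `f ⁻¹(Supp_Y l) = Supp l` for all `l`; it can
be obtained by sending `P` to a point of `Supp_Y(P̄) \ Supp_Y(P)` (this difference being
nonempty), where `P̄` is the intersection of all ind-objects strictly containing `P` and
`Supp_Y` is extended to subsets by unions. -/
theorem stmt_5 (L : Type*) [SemilatticeSup L] (Y : Type*) [tY : TopologicalSpace Y]
    [T0Space Y] (sY : L → Set Y)
    (hjoin : ∀ l l' : L, sY (l ⊔ l') = sY l ∪ sY l')
    (hinj : Function.Injective (fun S : IndObj L => ⋃ l ∈ S.1, sY l))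
    (htop : tY = TopologicalSpace.generateFrom {U : Set Y | ∃ l : L, U = (sY l)ᶜ}) :
    (∀ P : XL L, ((⋃ l ∈ indInterAbove P.1, sY l) \ (⋃ l ∈ P.1.1, sY l)).Nonempty) ∧
    ∃ f : XL L → Y, Continuous f ∧ (∀ l : L, f ⁻¹' sY l = ptSupp l) ∧
      ∀ P : XL L, f P ∈ (⋃ l ∈ indInterAbove P.1, sY l) \ (⋃ l ∈ P.1.1, sY l) :=
  stmt_5_general L Y (tY := tY) sY hjoin hinj htop
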